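/- arXiv:0904.3355 — 2 statements merged into one kernel-verified Lean document; each statement's English description precedes it below -/
import Mathlib

section
/- Let A ∈ GL_m(k) where k is a δ-field of characteristic 0, and let X be an invertible matrix over a δ-extension with σ(X) = AX and σ commuting with δ. Then for each n, the block lower-triangular matrix 𝒳 with (i,j)-block equal to (i choose j)·X⁽ⁱ⁻ʲ⁾ for i ≥ j (and 0 otherwise) satisfies σ(𝒳) = 𝒜·𝒳, where 𝒜 is the block lower-triangular matrix with (i,j)-block (i choose j)·A⁽ⁱ⁻ʲ⁾. -/
/-!
The block matrix with `(i, j)`-block `(i choose j) • F (i - j)` is the truncation of the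
exponential generating function `∑ F r tʳ / r!`, so two such matrices multiply by binomial
convolution of their sequences. The general Leibniz rule says that the derivatives of `A * X`
are the binomial convolution of those of `A` and of `X`, and since `σ` commutes with `δ`, the
derivatives of `σ(X) = A * X` are the images under `σ` of those of `X`.
-/

open Finset

theorem iterate_map_mul_eq_sum_antidiagonal {S : Type*} [Semiring S] (D : S →+ S)
    (hD : ∀ x y, D (x * y) = D x * y + x * D y) (n : ℕ) (x y : S) :
    D^[n] (x * y) = ∑ ij ∈ antidiagonal n, n.choose ij.1 • (D^[ij.1] x * D^[ij.2] y) := by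
  induction n with
  | zero => simp
  | succ n ih =>
    rw [sum_antidiagonal_choose_succ_nsmul (fun i j => D^[i] x * D^[j] y) n]
    simp only [Function.iterate_succ_apply', ih, map_sum, map_nsmul, hD, smul_add,
      sum_add_distrib]
    rw [add_comm]
    congr 1
    refine sum_congr rfl fun ⟨i, j⟩ hij => ?_
    rw [n.choose_symm_of_eq_add (mem_antidiagonal.1 hij).symm]

theorem sum_Icc_choose_mul_choose_nsmul {M : Type*} [AddCommMonoid M] (f : ℕ → ℕ → M)
    {i j : ℕ} (hji : j ≤ i) :
    ∑ l ∈ Icc j i, (i.choose l * l.choose j) • f (i - l) (l - j) =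
      i.choose j • ∑ ij ∈ antidiagonal (i - j), (i - j).choose ij.1 • f ij.1 ij.2 := by
  rw [smul_sum]
  refine sum_nbij' (fun l => (i - l, l - j)) (fun ij => j + ij.2) ?_ ?_ ?_ ?_ ?_
  · intro l hl; simp only [mem_Icc] at hl; simp only [HasAntidiagonal.mem_antidiagonal]; omega
  · intro ij hij; simp only [HasAntidiagonal.mem_antidiagonal] at hij; simp only [mem_Icc]; omega
  · intro l hl; simp only [mem_Icc] at hl; omega
  · intro ij hij
    simp only [HasAntidiagonal.mem_antidiagonal] at hij
    ext <;> dsimp only <;> omega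
  · intro l hl
    simp only [mem_Icc] at hl
    rw [Nat.choose_mul hl.1, ← Nat.choose_symm_of_eq_add (by omega : i - j = (i - l) + (l - j)),
      mul_smul]

section BlockMatrix

variable {ι R : Type*}

def binomialBlockMatrix [Semiring R] (n : ℕ) (F : ℕ → Matrix ι ι R) :
    Matrix (Fin (n + 1) × ι) (Fin (n + 1) × ι) R := fun p q =>
  if (q.1 : ℕ) ≤ (p.1 : ℕ) then
    ((p.1 : ℕ).choose (q.1 : ℕ)) • (F ((p.1 : ℕ) - (q.1 : ℕ))) p.2 q.2
  else 0

theorem binomialBlockMatrix_map {S : Type*} [Semiring R] [Semiring S] (f : R →+ S) (n : ℕ)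
    (F : ℕ → Matrix ι ι R) :
    (binomialBlockMatrix n F).map f = binomialBlockMatrix n (fun r => (F r).map f) := by
  ext p q
  simp only [binomialBlockMatrix, Matrix.map_apply]
  split_ifs <;> simp only [map_nsmul, map_zero]

theorem binomialBlockMatrix_mul [Fintype ι] [Semiring R] (n : ℕ) (F G : ℕ → Matrix ι ι R) :
    binomialBlockMatrix n F * binomialBlockMatrix n G =
      binomialBlockMatrix n
        (fun r => ∑ ij ∈ antidiagonal r, r.choose ij.1 • (F ij.1 * G ij.2)) := by
  ext ⟨i, a⟩ ⟨j, b⟩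
  have hterm : ∀ l : Fin (n + 1), ∑ c, binomialBlockMatrix n F (i, a) (l, c) *
      binomialBlockMatrix n G (l, c) (j, b) =
      if (j : ℕ) ≤ l ∧ (l : ℕ) ≤ i then
        ((i : ℕ).choose l * (l : ℕ).choose j) • (F (i - l) * G (l - j)) a b else 0 := by
    intro l
    by_cases h : (j : ℕ) ≤ l ∧ (l : ℕ) ≤ i
    · simp only [binomialBlockMatrix, if_pos h.1, if_pos h.2, if_pos h, Matrix.mul_apply,
        smul_sum, smul_mul_smul_comm]
    · rw [if_neg h]
      refine sum_eq_zero fun c _ => ?_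
      simp only [binomialBlockMatrix]
      split_ifs <;> first | omega | simp only [zero_mul, mul_zero]
  have hIcc :
      (range (n + 1)).filter (fun l : ℕ => (j : ℕ) ≤ l ∧ l ≤ (i : ℕ)) = Icc (j : ℕ) i := by
    ext l; simp only [mem_filter, mem_range, mem_Icc]; omega
  rw [Matrix.mul_apply, Fintype.sum_prod_type]
  simp only [hterm]
  rw [Fin.sum_univ_eq_sum_range (fun l => if (j : ℕ) ≤ l ∧ l ≤ (i : ℕ) then
      ((i : ℕ).choose l * l.choose j) • (F (i - l) * G (l - j)) a b else 0), ← sum_filter, hIcc]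
  simp only [binomialBlockMatrix]
  split_ifs with hji
  · rw [sum_Icc_choose_mul_choose_nsmul (fun s t => (F s * G t) a b) hji, Matrix.sum_apply]
    simp only [Matrix.smul_apply]
  · rw [Icc_eq_empty (by omega), sum_empty]

end BlockMatrix

theorem Matrix.map_derivation_mul {S R l m n : Type*} [CommSemiring S] [CommSemiring R]
    [Algebra S R] [Fintype m] (δ : Derivation S R R) (M : Matrix l m R) (N : Matrix m n R) :
    (M * N).map δ = M.map δ * N + M * N.map δ := by
  ext a b
  simp only [Matrix.map_apply, Matrix.mul_apply, Matrix.add_apply, map_sum, Derivation.leibniz,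
    smul_eq_mul, ← sum_add_distrib]
  exact sum_congr rfl fun c _ => by ring

theorem stmt4_general {k R : Type*} [Field k] [CommRing R] [Algebra k R]
    (σ : R ≃+* R) (δ : Derivation ℤ R R)
    (hcomm : ∀ x : R, σ (δ x) = δ (σ x))
    {m : ℕ} (A : Matrix (Fin m) (Fin m) k)
    (X : Matrix (Fin m) (Fin m) R)
    (hσX : X.map σ = A.map (algebraMap k R) * X) (n : ℕ) :
    letI d : Matrix (Fin m) (Fin m) R → Matrix (Fin m) (Fin m) R := fun M => M.map δ
    letI 𝒳 : Matrix (Fin (n + 1) × Fin m) (Fin (n + 1) × Fin m) R := fun p q =>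
      if (q.1 : ℕ) ≤ (p.1 : ℕ) then
        ((p.1 : ℕ).choose (q.1 : ℕ)) • (d^[(p.1 : ℕ) - (q.1 : ℕ)] X) p.2 q.2
      else 0
    letI 𝒜 : Matrix (Fin (n + 1) × Fin m) (Fin (n + 1) × Fin m) R := fun p q =>
      if (q.1 : ℕ) ≤ (p.1 : ℕ) then
        ((p.1 : ℕ).choose (q.1 : ℕ)) •
          (d^[(p.1 : ℕ) - (q.1 : ℕ)] (A.map (algebraMap k R))) p.2 q.2
      else 0
    𝒳.map σ = 𝒜 * 𝒳 := by
  let d : Matrix (Fin m) (Fin m) R →+ Matrix (Fin m) (Fin m) R := (δ : R →+ R).mapMatrix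
  change (binomialBlockMatrix n fun r => d^[r] X).map σ =
    binomialBlockMatrix n (fun r => d^[r] (A.map (algebraMap k R))) *
      binomialBlockMatrix n (fun r => d^[r] X)
  have hσd : Function.Commute d (Matrix.map · σ) := fun M => by
    ext
    simp only [d, AddMonoidHom.mapMatrix_apply, AddMonoidHom.coe_coe, Matrix.map_apply, hcomm]
  have leibniz : ∀ r M N, d^[r] (M * N) =
      ∑ ij ∈ antidiagonal r, r.choose ij.1 • (d^[ij.1] M * d^[ij.2] N) :=
    iterate_map_mul_eq_sum_antidiagonal d (Matrix.map_derivation_mul δ)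
  calc _ = binomialBlockMatrix n (fun r => (d^[r] X).map σ) :=
        binomialBlockMatrix_map (σ : R →+ R) n _
    _ = binomialBlockMatrix n (fun r => d^[r] (A.map (algebraMap k R) * X)) := by
        simp_rw [← hσX, ← (hσd.iterate_left _) X]
    _ = _ := by
        rw [binomialBlockMatrix_mul]
        simp_rw [leibniz]

/-- With `σ(X) = AX` and `σδ = δσ`, for each `n` the block lower-triangular
matrix `𝒳` with `(i,j)`-block `(i choose j)·X⁽ⁱ⁻ʲ⁾` satisfies `σ(𝒳) = 𝒜·𝒳`, where `𝒜`
has `(i,j)`-block `(i choose j)·A⁽ⁱ⁻ʲ⁾`. -/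
theorem stmt4 {k R : Type*} [Field k] [CharZero k] [CommRing R] [Algebra k R]
    (σ : R ≃+* R) (δ : Derivation ℤ R R)
    (hcomm : ∀ x : R, σ (δ x) = δ (σ x))
    {m : ℕ} (A : Matrix (Fin m) (Fin m) k) (hA : IsUnit A.det)
    (X : Matrix (Fin m) (Fin m) R) (hX : IsUnit X.det)
    (hσX : X.map σ = A.map (algebraMap k R) * X) (n : ℕ) :
    letI d : Matrix (Fin m) (Fin m) R → Matrix (Fin m) (Fin m) R := fun M => M.map δ
    letI 𝒳 : Matrix (Fin (n + 1) × Fin m) (Fin (n + 1) × Fin m) R := fun p q =>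
      if (q.1 : ℕ) ≤ (p.1 : ℕ) then
        ((p.1 : ℕ).choose (q.1 : ℕ)) • (d^[(p.1 : ℕ) - (q.1 : ℕ)] X) p.2 q.2
      else 0
    letI 𝒜 : Matrix (Fin (n + 1) × Fin m) (Fin (n + 1) × Fin m) R := fun p q =>
      if (q.1 : ℕ) ≤ (p.1 : ℕ) then
        ((p.1 : ℕ).choose (q.1 : ℕ)) •
          (d^[(p.1 : ℕ) - (q.1 : ℕ)] (A.map (algebraMap k R))) p.2 q.2
      else 0
    𝒳.map σ = 𝒜 * 𝒳 :=
  stmt4_general σ δ hcomm A X hσX n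
end

section
/- Let R be a σ-simple σδ-ring containing a σδ-field with σ-constants C, and let Ĉ be a σδ-field extension of C on which σ acts as the identity, with C relatively algebraically closed appropriately. Then R ⊗_C Ĉ is a simple σδ-ring. -/
/-!
Choose a `C`-basis of `Ĉ`; it is an `R`-basis of `R ⊗_C Ĉ`, in whose coordinates `σ ⊗ id` acts
as `σ`. In a nonzero `σ`-stable ideal `I`, take an element `y` of minimal support; by `σ`-simplicity
of `R` it can be normalised to have some coordinate equal to `1`, and then `σ y - y ∈ I` has
smaller support, so `σ y = y`. Hence the coordinates of `y` are constants, i.e. `y = 1 ⊗ w` with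
`0 ≠ w ∈ Ĉ`, which is a unit.
-/

open scoped TensorProduct

section FixedElement

variable {R S ι : Type*} [CommRing R] [CommRing S] [Algebra R S]
  (σ : R →+* R) (τ : S →+* S) (b : Module.Basis ι R S)

/-- The `i`-th coordinates of the elements of `I` supported in the support of `x` form a
`σ`-stable ideal of `R` which contains the nonzero coordinate of `x`, hence all of `R`. -/
theorem exists_mem_support_subset_repr_eq_one
    (hτ : ∀ z j, b.repr (τ z) j = σ (b.repr z j))
    (hσ : ∀ J : Ideal R, (∀ r ∈ J, σ r ∈ J) → J = ⊥ ∨ J = ⊤)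
    {I : Ideal S} (hI : ∀ z ∈ I, τ z ∈ I) {x : S} (hx : x ∈ I) {i : ι}
    (hi : b.repr x i ≠ 0) :
    ∃ y ∈ I, (b.repr y).support ⊆ (b.repr x).support ∧ b.repr y i = 1 := by
  let J : Ideal R := ((I.restrictScalars R) ⊓
    (Finsupp.supported R R ((b.repr x).support : Set ι)).comap b.repr.toLinearMap).map
      (b.coord i)
  have hJ : ∀ r, r ∈ J ↔ ∃ y ∈ I, (b.repr y).support ⊆ (b.repr x).support ∧ b.repr y i = r := by
    intro r
    simp [J, Finsupp.mem_supported, and_assoc]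
  have hJσ : ∀ r ∈ J, σ r ∈ J := by
    intro r hr
    obtain ⟨y, hy, hys, rfl⟩ := (hJ r).1 hr
    refine (hJ _).2 ⟨τ y, hI y hy, fun j hj => hys ?_, hτ y i⟩
    rw [Finsupp.mem_support_iff, hτ] at hj
    exact Finsupp.mem_support_iff.2 fun h => hj (by rw [h, map_zero])
  have hJtop : J = ⊤ := (hσ J hJσ).resolve_left fun h => hi <| by
    simpa [h] using (hJ _).2 ⟨x, hx, subset_rfl, rfl⟩
  exact (hJ 1).1 (hJtop ▸ Submodule.mem_top)

theorem support_repr_map_sub_subset_erase [DecidableEq ι]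
    (hτ : ∀ z j, b.repr (τ z) j = σ (b.repr z j))
    {y : S} {i : ι} (hi : b.repr y i = 1) :
    (b.repr (τ y - y)).support ⊆ (b.repr y).support.erase i := by
  intro j hj
  rw [Finsupp.mem_support_iff, map_sub, Finsupp.sub_apply, hτ] at hj
  refine Finset.mem_erase.2 ⟨?_, Finsupp.mem_support_iff.2 fun h => hj (by simp [h])⟩
  rintro rfl
  exact hj (by simp [hi])

theorem exists_mem_ne_zero_map_eq_self (hτ : ∀ z j, b.repr (τ z) j = σ (b.repr z j))
    (hσ : ∀ J : Ideal R, (∀ r ∈ J, σ r ∈ J) → J = ⊥ ∨ J = ⊤)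
    {I : Ideal S} (hI : ∀ z ∈ I, τ z ∈ I) (hI0 : I ≠ ⊥) :
    ∃ y ∈ I, y ≠ 0 ∧ τ y = y := by
  classical
  obtain ⟨x, hx, hx0⟩ := Submodule.exists_mem_ne_zero_of_ne_bot hI0
  induction hn : (b.repr x).support.card using Nat.strong_induction_on generalizing x with
  | _ n ih =>
  obtain ⟨i, hi⟩ : ∃ i, b.repr x i ≠ 0 := by
    by_contra! h
    exact hx0 (b.repr.injective (by ext; simp [h]))
  have : Nontrivial R := nontrivial_of_ne _ _ hi
  obtain ⟨y, hy, hys, hyi⟩ := exists_mem_support_subset_repr_eq_one σ τ b hτ hσ hI hx hi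
  have hy0 : y ≠ 0 := by rintro rfl; simp at hyi
  by_cases hfix : τ y = y
  · exact ⟨y, hy, hy0, hfix⟩
  refine ih _ ?_ (τ y - y) (I.sub_mem (hI y hy) hy) (sub_ne_zero.2 hfix) rfl
  calc (b.repr (τ y - y)).support.card
      ≤ ((b.repr x).support.erase i).card := Finset.card_le_card
        ((support_repr_map_sub_subset_erase σ τ b hτ hyi).trans (Finset.erase_subset_erase _ hys))
    _ < n := hn ▸ Finset.card_erase_lt_of_mem (Finsupp.mem_support_iff.2 hi)

end FixedElement

namespace Module.Basis

variable {C R M ι : Type*} [CommRing C] [CommRing R] [Algebra C R] [AddCommGroup M] [Module C M]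
  (B : Basis ι C M)

theorem baseChange_repr_map_of_map_tmul (σ : R →+* R)
    (hσ : ∀ c : C, σ (algebraMap C R c) = algebraMap C R c) (f : R ⊗[C] M →+ R ⊗[C] M)
    (hf : ∀ (r : R) (m : M), f (r ⊗ₜ m) = σ r ⊗ₜ m) (z : R ⊗[C] M) (j : ι) :
    (B.baseChange R).repr (f z) j = σ ((B.baseChange R).repr z j) := by
  induction z using TensorProduct.induction_on with
  | zero => simp
  | tmul r m => simp [hf, Algebra.smul_def, hσ]
  | add x y hx hy => simp [hx, hy]

theorem exists_eq_one_tmul_of_baseChange_repr_mem_range (z : R ⊗[C] M)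
    (hz : ∀ j, (B.baseChange R).repr z j ∈ Set.range (algebraMap C R)) :
    ∃ m : M, z = 1 ⊗ₜ m := by
  choose c hc using hz
  refine ⟨∑ j ∈ ((B.baseChange R).repr z).support, c j • B j, ?_⟩
  conv_lhs => rw [← (B.baseChange R).linearCombination_repr z]
  simp [Finsupp.linearCombination_apply, Finsupp.sum, ← hc, TensorProduct.tmul_sum,
    Algebra.algebraMap_eq_smul_one]

end Module.Basis

theorem stmt14_general {C R Chat : Type*} [Field C] [CommRing R] [Field Chat]
    [Algebra C R] [Algebra C Chat]
    (σ : R ≃+* R)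
    -- `C` is the field of `σ`-constants of `R`
    (hC : ∀ x : R, σ x = x ↔ x ∈ Set.range (algebraMap C R))
    -- `R` is `σ`-simple
    (hσsimple : ∀ I : Ideal R, (∀ x ∈ I, σ x ∈ I) → I = ⊥ ∨ I = ⊤)
    -- the induced automorphism `σ ⊗ id` and derivation on `S = R ⊗_C Ĉ`
    (σS : R ⊗[C] Chat ≃+* R ⊗[C] Chat)
    (hσS : ∀ (x : R) (y : Chat), σS (x ⊗ₜ[C] y) = σ x ⊗ₜ[C] y)
    (δS : Derivation ℤ (R ⊗[C] Chat) (R ⊗[C] Chat)) :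
    ∀ I : Ideal (R ⊗[C] Chat), (∀ x ∈ I, σS x ∈ I) → (∀ x ∈ I, δS x ∈ I) →
      I = ⊥ ∨ I = ⊤ := by
  intro I hσI _
  refine or_iff_not_imp_left.2 fun hI0 => ?_
  let B := Module.Basis.ofVectorSpace C Chat
  have hrepr := B.baseChange_repr_map_of_map_tmul σ.toRingHom (fun c => (hC _).2 ⟨c, rfl⟩)
    σS.toAddMonoidHom hσS
  obtain ⟨y, hy, hy0, hyfix⟩ :=
    exists_mem_ne_zero_map_eq_self σ.toRingHom σS.toRingHom _ hrepr hσsimple hσI hI0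
  obtain ⟨w, rfl⟩ := B.exists_eq_one_tmul_of_baseChange_repr_mem_range y fun j =>
    (hC _).1 ((hrepr y j).symm.trans (congrArg (fun z => (B.baseChange R).repr z j) hyfix))
  have hw : w ≠ 0 := by rintro rfl; exact hy0 (TensorProduct.tmul_zero _ _)
  have := I.mul_mem_left ((1 : R) ⊗ₜ[C] w⁻¹) hy
  rwa [Algebra.TensorProduct.tmul_mul_tmul, one_mul, inv_mul_cancel₀ hw,
    ← Algebra.TensorProduct.one_def, ← Ideal.eq_top_iff_one] at this

/-- Let `R` be a `σ`-simple `σδ`-ring whose field of `σ`-constants is `C`,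
and `Ĉ` a `δ`-field extension of `C` on which `σ` acts as the identity.  Then `R ⊗_C Ĉ`,
with the induced automorphism `σ ⊗ id` and derivation `δ ⊗ 1 + 1 ⊗ δ`, is a simple
`σδ`-ring. -/
theorem stmt14 {C R Chat : Type*} [Field C] [CommRing R] [Field Chat]
    [Algebra C R] [Algebra C Chat]
    (σ : R ≃+* R) (δ : Derivation ℤ R R)
    (hcomm : ∀ x : R, σ (δ x) = δ (σ x))
    -- `C` is the field of `σ`-constants of `R`
    (hC : ∀ x : R, σ x = x ↔ x ∈ Set.range (algebraMap C R))
    -- `δ` restricts to a derivation `dC` on `C`, and `δChat` extends it to `Ĉ`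
    (dC : C → C) (hdC : ∀ c : C, δ (algebraMap C R c) = algebraMap C R (dC c))
    (δChat : Derivation ℤ Chat Chat)
    (hδChat : ∀ c : C, δChat (algebraMap C Chat c) = algebraMap C Chat (dC c))
    -- `R` is `σ`-simple
    (hσsimple : ∀ I : Ideal R, (∀ x ∈ I, σ x ∈ I) → I = ⊥ ∨ I = ⊤)
    -- the induced automorphism `σ ⊗ id` and derivation on `S = R ⊗_C Ĉ`
    (σS : R ⊗[C] Chat ≃+* R ⊗[C] Chat)
    (hσS : ∀ (x : R) (y : Chat), σS (x ⊗ₜ[C] y) = σ x ⊗ₜ[C] y)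
    (δS : Derivation ℤ (R ⊗[C] Chat) (R ⊗[C] Chat))
    (hδS : ∀ (x : R) (y : Chat), δS (x ⊗ₜ[C] y) = δ x ⊗ₜ[C] y + x ⊗ₜ[C] δChat y) :
    ∀ I : Ideal (R ⊗[C] Chat), (∀ x ∈ I, σS x ∈ I) → (∀ x ∈ I, δS x ∈ I) →
      I = ⊥ ∨ I = ⊤ :=
  stmt14_general σ hC hσsimple σS hσS δS
end
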